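/- arXiv:2102.04305 — 2 statements merged into one kernel-verified Lean document; each statement's English description precedes it below -/
import Mathlib

section
/- Every polynomial $p \in \mathbb{R}[t_1,\dots,t_m]$ invariant under the full orthogonal group $\mathrm{O}_m(\mathbb{R})$ is a polynomial in $t_1^2 + \cdots + t_m^2$. -/
open MvPolynomial

/-!
Restricting `p` to a coordinate axis gives a one-variable polynomial `P` which is even, since `-1`
is orthogonal; hence `P(x) = q(x²)`. A reflection maps `‖t‖ • eᵢ` to `t`, so
`p(t) = P(‖t‖) = q(‖t‖²)`.
-/

namespace Polynomial

variable {R : Type*} [CommRing R]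

theorem coeff_comp_neg_X (P : R[X]) (n : ℕ) : (P.comp (-X)).coeff n = (-1) ^ n * P.coeff n := by
  rw [show (-X : R[X]) = C (-1) * X by simp, comp_C_mul_X_coeff, mul_comm]

theorem expand_two_contract_of_comp_neg_X [NoZeroDivisors R] [CharZero R] {P : R[X]}
    (hP : P.comp (-X) = P) : expand R 2 (contract 2 P) = P := by
  ext n
  rw [coeff_expand two_pos, coeff_contract two_ne_zero]
  split_ifs with hn
  · rw [Nat.div_mul_cancel hn]
  · have hodd : P.coeff n = -P.coeff n := by
      conv_lhs => rw [← hP]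
      rw [coeff_comp_neg_X, (Nat.odd_iff.mpr (Nat.two_dvd_ne_zero.mp hn)).neg_one_pow, neg_one_mul]
    exact (CharZero.eq_neg_self_iff.mp hodd).symm

end Polynomial

theorem MvPolynomial.eval_aeval_single {σ R : Type*} [CommSemiring R] [DecidableEq σ]
    (p : MvPolynomial σ R) (i : σ) (x : R) :
    (aeval (Pi.single i Polynomial.X) p).eval x = eval (Pi.single i x) p := by
  rw [← Polynomial.coe_aeval_eq_eval, comp_aeval_apply, aeval_eq_eval]
  congr
  funext j
  by_cases hj : j = i <;> simp [hj]

theorem exists_linearEquiv_sum_sq_preserving_apply_single {ι : Type*} [Fintype ι] [DecidableEq ι]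
    (i : ι) (t : ι → ℝ) :
    ∃ g : (ι → ℝ) ≃ₗ[ℝ] (ι → ℝ), (∀ s, ∑ j, g s j ^ 2 = ∑ j, s j ^ 2) ∧
      g (Pi.single i √(∑ j, t j ^ 2)) = t := by
  let E := WithLp.linearEquiv 2 ℝ (ι → ℝ)
  have hE : ∀ s, ∑ j, s j ^ 2 = ‖E.symm s‖ ^ 2 := fun s ↦
    (EuclideanSpace.real_norm_sq_eq _).symm
  have hnorm : ‖E.symm (Pi.single i √(∑ j, t j ^ 2))‖ = ‖E.symm t‖ := by
    rw [← sq_eq_sq₀ (norm_nonneg _) (norm_nonneg _), ← hE, ← hE]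
    simp [Pi.single_apply, ite_pow, Real.sq_sqrt (Finset.sum_nonneg fun j _ ↦ sq_nonneg (t j))]
  let r := Submodule.reflection (ℝ ∙ (E.symm (Pi.single i √(∑ j, t j ^ 2)) - E.symm t))ᗮ
  refine ⟨E.symm ≪≫ₗ r.toLinearEquiv ≪≫ₗ E, fun s ↦ ?_, ?_⟩
  · rw [hE, hE]
    exact congrArg (· ^ 2) (r.norm_map _)
  · exact (congrArg E (Submodule.reflection_sub hnorm)).trans (E.apply_symm_apply t)

/-- Every polynomial `p ∈ ℝ[t₁,…,t_m]` invariant under the full orthogonal group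
`O_m(ℝ)` (all linear maps preserving the quadratic form `∑ tᵢ²`) is a polynomial
in `t₁² + ⋯ + t_m²`. -/
theorem orthogonal_invariant_poly (m : ℕ) (p : MvPolynomial (Fin m) ℝ)
    (hinv : ∀ g : (Fin m → ℝ) ≃ₗ[ℝ] (Fin m → ℝ),
      (∀ t : Fin m → ℝ, ∑ i, (g t i) ^ 2 = ∑ i, (t i) ^ 2) →
      ∀ t : Fin m → ℝ, eval (g t) p = eval t p) :
    ∃ q : Polynomial ℝ, ∀ t : Fin m → ℝ,
      eval t p = q.eval (∑ i, (t i) ^ 2) := by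
  rcases m.eq_zero_or_pos with rfl | hm
  · exact ⟨Polynomial.C (eval 0 p), fun t ↦ by simp [Subsingleton.elim t 0]⟩
  let i : Fin m := ⟨0, hm⟩
  let P : Polynomial ℝ := aeval (Pi.single i Polynomial.X) p
  have hP_even : P.comp (-Polynomial.X) = P := Polynomial.funext fun x ↦ by
    rw [Polynomial.eval_comp, Polynomial.eval_neg, Polynomial.eval_X, eval_aeval_single,
      eval_aeval_single, Pi.single_neg]
    exact hinv (LinearEquiv.neg ℝ (M := Fin m → ℝ)) (fun s ↦ by simp) _
  refine ⟨Polynomial.contract 2 P, fun t ↦ ?_⟩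
  obtain ⟨g, hg, hgt⟩ := exists_linearEquiv_sum_sq_preserving_apply_single i t
  let r := √(∑ j, t j ^ 2)
  calc eval t p = eval (g (Pi.single i r)) p := by rw [hgt]
    _ = eval (Pi.single i r) p := hinv g hg _
    _ = P.eval r := (eval_aeval_single p i r).symm
    _ = (Polynomial.expand ℝ 2 (Polynomial.contract 2 P)).eval r := by
      rw [Polynomial.expand_two_contract_of_comp_neg_X hP_even]
    _ = (Polynomial.contract 2 P).eval (∑ j, t j ^ 2) := by
      rw [Polynomial.expand_eval, Real.sq_sqrt (by positivity)]
end

section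
/- For $k \geq 1$, every polynomial on $\mathbb{R}^2$ of degree at most $k-1$ invariant under the dihedral group of order $2k$ (the symmetry group of a regular $k$-gon centered at the origin) is a polynomial in $t_1^2 + t_2^2$. -/
open MvPolynomial Real

/-- aeval of a monomial under a diagonal substitution. -/
lemma aux_aeval_diag_monomial (a b r : ℂ) (v : Fin 2 →₀ ℕ) :
    aeval (![C a * X 0, C b * X 1] : Fin 2 → MvPolynomial (Fin 2) ℂ) (monomial v r)
      = monomial v (a ^ v 0 * b ^ v 1 * r) := by
  rw [aeval_monomial, monomial_eq]
  rw [Finsupp.prod_fintype _ _ (fun i => pow_zero _),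
      Finsupp.prod_fintype _ _ (fun i => pow_zero _)]
  simp only [Fin.prod_univ_two, Matrix.cons_val_zero, Matrix.cons_val_one, Matrix.head_cons,
    mul_pow, ← C_pow, algebraMap_eq]
  simp only [C_mul]
  ring

lemma aux_coeff_aeval_diag (a b : ℂ) (Q : MvPolynomial (Fin 2) ℂ) (m : Fin 2 →₀ ℕ) :
    coeff m (aeval (![C a * X 0, C b * X 1] : Fin 2 → MvPolynomial (Fin 2) ℂ) Q)
      = a ^ m 0 * b ^ m 1 * coeff m Q := by
  conv_lhs => rw [Q.as_sum, map_sum]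
  simp only [aux_aeval_diag_monomial]
  rw [MvPolynomial.coeff_sum]
  simp only [coeff_monomial]
  rw [Finset.sum_ite_eq' Q.support m (fun v => a ^ v 0 * b ^ v 1 * coeff v Q)]
  by_cases h : m ∈ Q.support
  · simp [h]
  · simp [h, MvPolynomial.notMem_support_iff.mp h]

/-- total degree bound for substitution by degree ≤ 1 polynomials -/
lemma aux_totalDegree_aeval_le (g : Fin 2 → MvPolynomial (Fin 2) ℂ)
    (hg : ∀ i, (g i).totalDegree ≤ 1) (p : MvPolynomial (Fin 2) ℝ) :
    (aeval g p).totalDegree ≤ p.totalDegree := by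
  conv_lhs => rw [p.as_sum, map_sum]
  refine (totalDegree_finset_sum _ _).trans (Finset.sup_le fun v hv => ?_)
  rw [aeval_monomial]
  refine (totalDegree_mul _ _).trans ?_
  have h1 : (algebraMap ℝ (MvPolynomial (Fin 2) ℂ) (coeff v p)).totalDegree = 0 := by
    rw [IsScalarTower.algebraMap_apply ℝ ℂ (MvPolynomial (Fin 2) ℂ),
      MvPolynomial.algebraMap_eq, totalDegree_C]
  rw [h1, zero_add]
  rw [Finsupp.prod_fintype _ _ (fun i => pow_zero _)]
  refine (totalDegree_finset_prod _ _).trans ?_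
  calc ∑ i : Fin 2, ((g i) ^ v i).totalDegree
      ≤ ∑ i : Fin 2, v i * 1 := Finset.sum_le_sum fun i _ =>
        (totalDegree_pow _ _).trans (Nat.mul_le_mul_left _ (hg i))
    _ = v.sum fun _ e => e := by
        rw [Finsupp.sum_fintype _ _ (fun i => rfl)]; simp
    _ ≤ p.totalDegree := le_totalDegree hv

/-- For `k ≥ 1`, every polynomial on `ℝ²` of degree at most `k - 1` invariant
under the dihedral group of order `2k` (generated by the rotation through
`2π/k` and a reflection) is a polynomial in `t₁² + t₂²`. -/
theorem dihedral_I2k_invariant_poly (k : ℕ) (hk : 1 ≤ k)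
    (p : MvPolynomial (Fin 2) ℝ) (hdeg : p.totalDegree ≤ k - 1)
    (hrot : ∀ t : Fin 2 → ℝ,
      eval ![Real.cos (2 * π / k) * t 0 - Real.sin (2 * π / k) * t 1,
             Real.sin (2 * π / k) * t 0 + Real.cos (2 * π / k) * t 1] p = eval t p)
    (hrefl : ∀ t : Fin 2 → ℝ, eval ![t 0, -(t 1)] p = eval t p) :
    ∃ q : Polynomial ℝ, ∀ t : Fin 2 → ℝ,
      eval t p = q.eval ((t 0) ^ 2 + (t 1) ^ 2) := by
  have hk0 : (k : ℕ) ≠ 0 := by omega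
  set θ : ℝ := 2 * π / k with hθ
  set c : ℝ := Real.cos θ with hc
  set s : ℝ := Real.sin θ with hs
  set ω : ℂ := (c : ℂ) + (s : ℂ) * Complex.I with hω
  have hone : (c : ℂ) ^ 2 + (s : ℂ) ^ 2 = 1 := by
    have h := Real.sin_sq_add_cos_sq θ
    push_cast
    norm_cast
    linarith
  have hωmul : ω * ((c : ℂ) - (s : ℂ) * Complex.I) = 1 := by
    rw [hω]
    linear_combination hone - (s : ℂ) ^ 2 * Complex.I_sq
  have hωinv : ω⁻¹ = (c : ℂ) - (s : ℂ) * Complex.I :=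
    inv_eq_of_mul_eq_one_right hωmul
  have hωexp : ω = Complex.exp (2 * (π : ℂ) * Complex.I / k) := by
    rw [show (2 * (π : ℂ) * Complex.I / (k : ℂ)) = (θ : ℂ) * Complex.I by
      rw [hθ]; push_cast; ring]
    rw [Complex.exp_mul_I, ← Complex.ofReal_cos, ← Complex.ofReal_sin, hω, hc, hs]
  have hprim : IsPrimitiveRoot ω k := hωexp ▸ Complex.isPrimitiveRoot_exp k hk0
  have hω0 : ω ≠ 0 := by rw [hωexp]; exact Complex.exp_ne_zero _
  set Rot : Fin 2 → MvPolynomial (Fin 2) ℝ :=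
    ![C c * X 0 - C s * X 1, C s * X 0 + C c * X 1] with hRot
  set TR : Fin 2 → MvPolynomial (Fin 2) ℂ :=
    ![C (1/2) * (X 0 + X 1), C Complex.I * C (1/2) * (X 1 - X 0)] with hTR
  have haee : ∀ (v : Fin 2 → ℝ) (f : MvPolynomial (Fin 2) ℝ), aeval v f = eval v f := by
    intro v f
    rw [aeval_def, Algebra.algebraMap_self, eval₂_id]
  have haeeC : ∀ (v : Fin 2 → ℂ) (f : MvPolynomial (Fin 2) ℂ), aeval v f = eval v f := by
    intro v f
    rw [aeval_def, Algebra.algebraMap_self, eval₂_id]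
  -- rotation invariance as a polynomial identity over ℝ
  have hrotP : aeval Rot p = p := by
    apply MvPolynomial.funext
    intro t
    have h1 : eval t (aeval Rot p) = eval (fun i => eval t (Rot i)) p := by
      rw [← haee t (aeval Rot p), comp_aeval_apply (f := Rot) (aeval t) p, haee]
      congr 1
    rw [h1]
    have h2 : (fun i => eval t (Rot i)) =
        ![c * t 0 - s * t 1, s * t 0 + c * t 1] := by
      funext i
      fin_cases i <;> simp [hRot]
    rw [h2]
    exact hrot t
  set Q : MvPolynomial (Fin 2) ℂ := aeval TR p with hQ
  have hACR : ∀ r : ℝ, (algebraMap ℝ (MvPolynomial (Fin 2) ℂ)) r = C (r : ℂ) := by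
    intro r
    rw [IsScalarTower.algebraMap_apply ℝ ℂ (MvPolynomial (Fin 2) ℂ),
      MvPolynomial.algebraMap_eq, Complex.coe_algebraMap]
  set b : ℂ := (c : ℂ) - (s : ℂ) * Complex.I with hb
  set D : Fin 2 → MvPolynomial (Fin 2) ℂ := ![C ω * X 0, C b * X 1] with hD
  have hI2 : (C Complex.I : MvPolynomial (Fin 2) ℂ) * C Complex.I = -1 := by
    rw [← C_mul, Complex.I_mul_I, map_neg, map_one]
  -- key commutation identity
  have hcomm : (fun i => aeval D (TR i)) = (fun i => aeval TR (Rot i)) := by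
    funext i
    fin_cases i <;>
      simp only [hTR, hRot, Fin.isValue, Fin.mk_zero, Fin.mk_one,
        Matrix.cons_val_zero, Matrix.cons_val_one, Matrix.head_cons,
        map_sub, map_add, map_mul, aeval_C, aeval_X, hACR, hD, hω, hb, C_add, C_sub, C_mul,
        MvPolynomial.algebraMap_eq]
    case _ => ring
    case _ => linear_combination (-(C (s : ℂ) * C ((1:ℂ)/2)) * (X 0 + X 1)) * hI2
  have hQD : aeval D Q = Q := by
    have e1 : aeval D Q = aeval (fun i => aeval D (TR i)) p :=
      comp_aeval_apply (f := TR) ((aeval D).restrictScalars ℝ) p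
    have e2 : aeval TR (aeval Rot p) = aeval (fun i => aeval TR (Rot i)) p :=
      comp_aeval_apply (f := Rot) (aeval TR) p
    rw [e1, hcomm, ← e2, hrotP]
  -- degree bound
  have hdegQ : Q.totalDegree ≤ k - 1 := by
    refine le_trans (aux_totalDegree_aeval_le TR ?_ p) hdeg
    have hX01 : ((X 0 + X 1 : MvPolynomial (Fin 2) ℂ)).totalDegree ≤ 1 :=
      (totalDegree_add _ _).trans (by simp [totalDegree_X])
    have hX10 : ((X 1 - X 0 : MvPolynomial (Fin 2) ℂ)).totalDegree ≤ 1 :=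
      (totalDegree_sub _ _).trans (by simp [totalDegree_X])
    intro i
    fin_cases i <;>
      simp only [hTR, Fin.isValue, Fin.mk_zero, Fin.mk_one,
        Matrix.cons_val_zero, Matrix.cons_val_one, Matrix.head_cons]
    · exact (totalDegree_mul _ _).trans (by simpa [totalDegree_C] using hX01)
    · refine (totalDegree_mul _ _).trans ?_
      rw [← C_mul, totalDegree_C, zero_add]
      exact hX10
  -- diagonal support
  have hdiag : ∀ m ∈ Q.support, m 0 = m 1 := by
    intro m hm
    have hcne : coeff m Q ≠ 0 := mem_support_iff.mp hm
    have h1 := aux_coeff_aeval_diag ω b Q m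
    rw [show (![C ω * X 0, C b * X 1] : Fin 2 → MvPolynomial (Fin 2) ℂ) = D from rfl, hQD] at h1
    have h2 : ω ^ m 0 * b ^ m 1 = 1 := by
      apply mul_right_cancel₀ hcne
      rw [one_mul, ← h1]
    rw [← hωinv] at h2
    have h3 : ω ^ m 0 = ω ^ m 1 := by
      rw [inv_pow] at h2
      exact (mul_inv_eq_one₀ (pow_ne_zero _ hω0)).mp h2
    have hsum : m 0 + m 1 ≤ k - 1 := by
      have h4 := le_totalDegree hm
      rw [Finsupp.sum_fintype _ _ (fun i => rfl), Fin.sum_univ_two] at h4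
      exact h4.trans hdegQ
    rcases le_total (m 0) (m 1) with hle | hle
    · have h5 : ω ^ (m 0) * ω ^ (m 1 - m 0) = ω ^ m 0 * 1 := by
        rw [mul_one, ← pow_add, h3]
        congr 1
        omega
      have h6 : ω ^ (m 1 - m 0) = 1 := mul_left_cancel₀ (pow_ne_zero _ hω0) h5
      have := Nat.eq_zero_of_dvd_of_lt (hprim.dvd_of_pow_eq_one _ h6) (by omega)
      omega
    · have h5 : ω ^ (m 1) * ω ^ (m 0 - m 1) = ω ^ m 1 * 1 := by
        rw [mul_one, ← pow_add, ← h3]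
        congr 1
        omega
      have h6 : ω ^ (m 0 - m 1) = 1 := mul_left_cancel₀ (pow_ne_zero _ hω0) h5
      have := Nat.eq_zero_of_dvd_of_lt (hprim.dvd_of_pow_eq_one _ h6) (by omega)
      omega
  -- construct q
  refine ⟨∑ m ∈ Q.support, Polynomial.C (coeff m Q).re * Polynomial.X ^ (m 0), fun t => ?_⟩
  set z : ℂ := (t 0 : ℂ) + (t 1 : ℂ) * Complex.I with hz
  set S : ℝ := t 0 ^ 2 + t 1 ^ 2 with hS
  have hzz : z * (starRingEnd ℂ) z = (S : ℂ) := by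
    rw [Complex.mul_conj, hz, Complex.normSq_add_mul_I]
  have hzre : z.re = t 0 := by simp [hz]
  have hzim : z.im = t 1 := by simp [hz]
  -- evaluation of Q at (z, conj z) equals eval t p
  have hev : eval ![z, (starRingEnd ℂ) z] Q = ((eval t p : ℝ) : ℂ) := by
    have e3 : aeval ![z, (starRingEnd ℂ) z] Q
        = aeval (fun i => aeval ![z, (starRingEnd ℂ) z] (TR i)) p :=
      comp_aeval_apply (f := TR) ((aeval ![z, (starRingEnd ℂ) z]).restrictScalars ℝ) p
    rw [← haeeC, e3]
    have h2 : (fun i => aeval ![z, (starRingEnd ℂ) z] (TR i)) =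
        (fun i => ((t i : ℝ) : ℂ)) := by
      funext i
      fin_cases i <;>
        simp only [hTR, Fin.isValue, Fin.mk_zero, Fin.mk_one,
          map_sub, map_add, map_mul, aeval_C, aeval_X,
          Matrix.cons_val_zero, Matrix.cons_val_one, Matrix.head_cons,
          Algebra.algebraMap_self, RingHom.id_apply]
      · rw [Complex.add_conj, hzre]
        push_cast
        ring
      · have h4 : (starRingEnd ℂ) z - z = -((2 * t 1 : ℝ) * Complex.I) := by
          have h5 := Complex.sub_conj z
          rw [hzim] at h5
          push_cast at h5 ⊢
          linear_combination -h5
        rw [sub_eq_iff_eq_add'] at h4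
        rw [h4]
        push_cast
        linear_combination -(t 1 : ℂ) * Complex.I_sq
    rw [h2]
    have h3 : ((algebraMap ℝ ℂ) (eval t p)) = aeval (fun i => ((t i : ℝ) : ℂ)) p := by
      rw [aeval_def, ← eval₂_id (g := t) p, eval₂_comp_left (algebraMap ℝ ℂ) (RingHom.id ℝ) t p]
      rfl
    rw [← h3, Complex.coe_algebraMap]
  -- expand and take real parts
  have hexp : eval ![z, (starRingEnd ℂ) z] Q
      = ∑ m ∈ Q.support, (coeff m Q) * (S : ℂ) ^ (m 0) := by
    conv_lhs => rw [Q.as_sum, map_sum]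
    refine Finset.sum_congr rfl fun m hm => ?_
    rw [eval_monomial, Finsupp.prod_fintype _ _ (fun i => pow_zero _), Fin.prod_univ_two]
    simp only [Matrix.cons_val_zero, Matrix.cons_val_one, Matrix.head_cons]
    rw [← hdiag m hm, ← mul_pow, hzz]
  have hre : eval t p = (eval ![z, (starRingEnd ℂ) z] Q).re := by
    rw [hev, Complex.ofReal_re]
  rw [hre, hexp, Complex.re_sum, Polynomial.eval_finset_sum]
  refine Finset.sum_congr rfl fun m hm => ?_
  simp only [← Complex.ofReal_pow, Complex.mul_re, Complex.ofReal_re, Complex.ofReal_im,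
    mul_zero, sub_zero, Polynomial.eval_mul, Polynomial.eval_pow, Polynomial.eval_C,
    Polynomial.eval_X]
end
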